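/- arXiv:2503.08209 — 2 statements merged into one kernel-verified Lean document; each statement's English description precedes it below -/
import Mathlib

section
/- Let H ∈ R^{m×m} be strictly upper triangular (H_{i,j} = 0 for i ≥ j) with |H_{i,j}| ≤ M_H for all i,j, and let B = diag(B_1,...,B_m) with B_j > 0. Then for every β ∈ R^m, ⟨Hβ, B Hβ⟩ ≤ M_H² Σ_{j=2}^m Σ_{ℓ=1}^{j−1} (m−ℓ) B_ℓ β_j². -/
open Finset

/-- For a strictly upper triangular `H ∈ ℝ^{m×m}` with entries bounded by `M_H`
and a positive diagonal weight `B`, the `B`-weighted quadratic form of `Hβ`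
satisfies `⟨Hβ, B Hβ⟩ ≤ M_H² Σ_{j} Σ_{ℓ<j} (m−ℓ) B_ℓ β_j²`
(0-based indices: the coefficient `m − ℓ` becomes `m − 1 − ℓ`). -/
theorem stmt6 (m : ℕ) (H : Matrix (Fin m) (Fin m) ℝ) (B β : Fin m → ℝ) (MH : ℝ)
    (hH : ∀ i j : Fin m, j ≤ i → H i j = 0)
    (hHbdd : ∀ i j : Fin m, |H i j| ≤ MH)
    (hB : ∀ j : Fin m, 0 < B j) :
    ∑ i : Fin m, B i * (H.mulVec β i) ^ 2 ≤
      MH ^ 2 * ∑ j : Fin m, ∑ ℓ ∈ Finset.univ.filter (fun ℓ : Fin m => ℓ < j),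
        ((m : ℝ) - 1 - (ℓ : ℕ)) * B ℓ * (β j) ^ 2 := by
  rcases Nat.eq_zero_or_pos m with hm | hm
  · subst hm; simp
  have hMH : 0 ≤ MH := le_trans (abs_nonneg _) (hHbdd ⟨0, hm⟩ ⟨0, hm⟩)
  have swap : ∑ j : Fin m, ∑ ℓ ∈ Finset.univ.filter (fun ℓ : Fin m => ℓ < j),
        ((m : ℝ) - 1 - (ℓ : ℕ)) * B ℓ * (β j) ^ 2
      = ∑ ℓ : Fin m, ∑ j ∈ Finset.univ.filter (fun j : Fin m => ℓ < j),
        ((m : ℝ) - 1 - (ℓ : ℕ)) * B ℓ * (β j) ^ 2 := by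
    simp only [Finset.sum_filter]
    exact Finset.sum_comm
  rw [swap, Finset.mul_sum]
  apply Finset.sum_le_sum
  intro ℓ _
  have hfil : Finset.univ.filter (fun j : Fin m => ℓ < j) = Finset.Ioi ℓ := by
    ext j; simp
  rw [hfil]
  set C : ℝ := (m : ℝ) - 1 - (ℓ : ℕ) with hC
  have hmv : H.mulVec β ℓ = ∑ j ∈ Finset.Ioi ℓ, H ℓ j * β j := by
    rw [Matrix.mulVec, dotProduct]
    symm
    apply Finset.sum_subset (Finset.subset_univ _)
    intro j _ hj
    rw [Finset.mem_Ioi, not_lt] at hj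
    rw [hH ℓ j hj, zero_mul]
  have hcard : ((Finset.Ioi ℓ).card : ℝ) = C := by
    rw [Fin.card_Ioi, hC]
    have h1 : (ℓ : ℕ) + 1 ≤ m := ℓ.isLt
    have : m - 1 - (ℓ : ℕ) = m - (1 + (ℓ : ℕ)) := by omega
    rw [this, Nat.cast_sub (by omega)]
    push_cast; ring
  have cs : (∑ j ∈ Finset.Ioi ℓ, H ℓ j * β j) ^ 2
      ≤ C * ∑ j ∈ Finset.Ioi ℓ, (H ℓ j * β j) ^ 2 := by
    rw [← hcard]
    exact sq_sum_le_card_mul_sum_sq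
  have hterm : ∀ j ∈ Finset.Ioi ℓ, (H ℓ j * β j) ^ 2 ≤ MH ^ 2 * β j ^ 2 := by
    intro j _
    rw [mul_pow]
    apply mul_le_mul_of_nonneg_right _ (sq_nonneg _)
    rw [← sq_abs]
    exact pow_le_pow_left₀ (abs_nonneg _) (hHbdd ℓ j) 2
  have hC0 : 0 ≤ C := by
    rw [← hcard]; positivity
  calc B ℓ * (H.mulVec β ℓ) ^ 2
      ≤ B ℓ * (C * ∑ j ∈ Finset.Ioi ℓ, (H ℓ j * β j) ^ 2) := by
        apply mul_le_mul_of_nonneg_left _ (hB ℓ).le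
        rw [hmv]; exact cs
    _ ≤ B ℓ * (C * ∑ j ∈ Finset.Ioi ℓ, MH ^ 2 * β j ^ 2) := by
        apply mul_le_mul_of_nonneg_left _ (hB ℓ).le
        exact mul_le_mul_of_nonneg_left (Finset.sum_le_sum hterm) hC0
    _ = MH ^ 2 * ∑ j ∈ Finset.Ioi ℓ, C * B ℓ * β j ^ 2 := by
        rw [Finset.mul_sum, Finset.mul_sum, Finset.mul_sum]
        apply Finset.sum_congr rfl
        intro j _; ring
end

section
/- Let M_H, δ > 0 and define B_1 > 0 arbitrarily and recursively B_j = 2e^δ M_H² Σ_{ℓ=1}^{j−1} (m−ℓ) B_ℓ for j = 2,...,m. Then for any strictly upper triangular matrix H ∈ R^{m×m} with all entries bounded in absolute value by M_H, and all β ∈ R^m: 2 e^δ ⟨Hβ, B Hβ⟩ ≤ ⟨β, Bβ⟩, where B = diag(B_1,...,B_m). -/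
open Finset

lemma stmt7_filter_Iio {m : ℕ} (j : Fin m) :
    Finset.univ.filter (fun ℓ : Fin m => ℓ < j) = Finset.Iio j := by
  ext ℓ; simp

lemma stmt7_sum_comm {m : ℕ} (f : Fin m → Fin m → ℝ) :
    ∑ i : Fin m, ∑ j ∈ Finset.Ioi i, f i j
      = ∑ j : Fin m, ∑ i ∈ Finset.Iio j, f i j := by
  have h1 : ∀ i : Fin m, Finset.Ioi i = Finset.univ.filter (fun j => i < j) := by
    intro i; ext j; simp
  have h2 : ∀ j : Fin m, Finset.Iio j = Finset.univ.filter (fun i => i < j) := by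
    intro j; ext i; simp
  simp_rw [h1, h2, Finset.sum_filter]
  exact Finset.sum_comm

/-- With the weights `B_j` defined recursively by
`B_j = 2e^δ M_H² Σ_{ℓ<j} (m−ℓ) B_ℓ` (0-based: coefficient `m − 1 − ℓ`) and
`B_1 > 0` arbitrary, every strictly upper triangular `H` with entries bounded
by `M_H` satisfies `2 e^δ ⟨Hβ, B Hβ⟩ ≤ ⟨β, Bβ⟩` for all `β ∈ ℝᵐ`. -/
theorem stmt7 (m : ℕ) (hm : 0 < m) (MH δ : ℝ) (hMH : 0 < MH) (hδ : 0 < δ)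
    (B : Fin m → ℝ) (hB1 : 0 < B ⟨0, hm⟩)
    (hrec : ∀ j : Fin m, 0 < (j : ℕ) →
      B j = 2 * Real.exp δ * MH ^ 2 *
        ∑ ℓ ∈ Finset.univ.filter (fun ℓ : Fin m => ℓ < j),
          ((m : ℝ) - 1 - (ℓ : ℕ)) * B ℓ) :
    ∀ H : Matrix (Fin m) (Fin m) ℝ,
      (∀ i j : Fin m, j ≤ i → H i j = 0) →
      (∀ i j : Fin m, |H i j| ≤ MH) →
      ∀ β : Fin m → ℝ,
        2 * Real.exp δ * ∑ i : Fin m, B i * (H.mulVec β i) ^ 2 ≤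
          ∑ i : Fin m, B i * (β i) ^ 2 := by
  have hexp : (0:ℝ) < Real.exp δ := Real.exp_pos δ
  -- positivity of B
  have hBpos : ∀ j : Fin m, 0 < B j := by
    have main : ∀ n : ℕ, ∀ j : Fin m, (j : ℕ) = n → 0 < B j := by
      intro n
      induction n using Nat.strong_induction_on with
      | _ n ih =>
        intro j hj
        rcases Nat.eq_zero_or_pos (j : ℕ) with h0 | hpos
        · have : j = ⟨0, hm⟩ := by ext; simpa using h0
          rw [this]; exact hB1
        · rw [hrec j hpos, stmt7_filter_Iio]
          have hsum : 0 < ∑ ℓ ∈ Finset.Iio j, ((m : ℝ) - 1 - (ℓ : ℕ)) * B ℓ := by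
            apply Finset.sum_pos'
            · intro ℓ hℓ
              have hℓm : (ℓ : ℕ) ≤ m - 1 := by have := ℓ.isLt; omega
              have h1 : (0:ℝ) ≤ (m : ℝ) - 1 - (ℓ : ℕ) := by
                have := ℓ.isLt
                have : ((ℓ:ℕ):ℝ) ≤ (m:ℝ) - 1 := by
                  have : ((ℓ:ℕ):ℝ) + 1 ≤ (m:ℝ) := by exact_mod_cast ℓ.isLt
                  linarith
                linarith
              have hBℓ : 0 < B ℓ := by
                have hlt : (ℓ : ℕ) < n := by
                  rw [← hj]; exact Fin.lt_iff_val_lt_val.mp (Finset.mem_Iio.mp hℓ)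
                exact ih (ℓ : ℕ) hlt ℓ rfl
              exact mul_nonneg h1 hBℓ.le
            · refine ⟨⟨0, hm⟩, Finset.mem_Iio.mpr ?_, ?_⟩
              · exact Fin.lt_iff_val_lt_val.mpr hpos
              · have hm2 : 2 ≤ m := by
                  have := j.isLt; omega
                have h1 : (1:ℝ) ≤ (m : ℝ) - 1 - ((⟨0, hm⟩ : Fin m) : ℕ) := by
                  simp only [Fin.val_mk, Nat.cast_zero]
                  have : (2:ℝ) ≤ (m:ℝ) := by exact_mod_cast hm2
                  linarith
                have hB0 : 0 < B ⟨0, hm⟩ := hB1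
                nlinarith
          positivity
    intro j; exact main (j : ℕ) j rfl
  intro H hup hbd β
  -- mulVec as a sum over Ioi
  have hmv : ∀ i : Fin m, H.mulVec β i = ∑ j ∈ Finset.Ioi i, H i j * β j := by
    intro i
    rw [Matrix.mulVec, dotProduct]
    symm
    apply Finset.sum_subset (Finset.subset_univ _)
    intro j _ hj
    have : j ≤ i := le_of_not_gt (by simpa using hj)
    rw [hup i j this, zero_mul]
  -- pointwise bound
  have hsq : ∀ i : Fin m, (H.mulVec β i) ^ 2 ≤
      ((m : ℝ) - 1 - (i : ℕ)) * MH ^ 2 * ∑ j ∈ Finset.Ioi i, (β j) ^ 2 := by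
    intro i
    rw [hmv i]
    calc (∑ j ∈ Finset.Ioi i, H i j * β j) ^ 2
        ≤ (Finset.Ioi i).card * ∑ j ∈ Finset.Ioi i, (H i j * β j) ^ 2 :=
          sq_sum_le_card_mul_sum_sq
      _ ≤ ((m : ℝ) - 1 - (i : ℕ)) * ∑ j ∈ Finset.Ioi i, MH ^ 2 * (β j) ^ 2 := by
          apply mul_le_mul
          · rw [Fin.card_Ioi]
            rw [Nat.cast_sub (by have := i.isLt; omega), Nat.cast_sub (by have := i.isLt; omega)]
            simp
          · apply Finset.sum_le_sum
            intro j _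
            rw [mul_pow]
            apply mul_le_mul_of_nonneg_right _ (sq_nonneg _)
            rw [← sq_abs]
            exact pow_le_pow_left₀ (abs_nonneg _) (hbd i j) 2
          · apply Finset.sum_nonneg; intro j _; positivity
          · have := i.isLt
            have : ((i:ℕ):ℝ) + 1 ≤ (m:ℝ) := by exact_mod_cast i.isLt
            linarith
      _ = ((m : ℝ) - 1 - (i : ℕ)) * MH ^ 2 * ∑ j ∈ Finset.Ioi i, (β j) ^ 2 := by
          rw [← Finset.mul_sum, mul_assoc]
  calc 2 * Real.exp δ * ∑ i : Fin m, B i * (H.mulVec β i) ^ 2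
      ≤ 2 * Real.exp δ * ∑ i : Fin m, B i *
          (((m : ℝ) - 1 - (i : ℕ)) * MH ^ 2 * ∑ j ∈ Finset.Ioi i, (β j) ^ 2) := by
        apply mul_le_mul_of_nonneg_left _ (by positivity)
        exact Finset.sum_le_sum fun i _ => mul_le_mul_of_nonneg_left (hsq i) (hBpos i).le
    _ = ∑ i : Fin m, ∑ j ∈ Finset.Ioi i,
          2 * Real.exp δ * MH ^ 2 * (((m : ℝ) - 1 - (i : ℕ)) * B i) * (β j) ^ 2 := by
        rw [Finset.mul_sum]
        apply Finset.sum_congr rfl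
        intro i _
        rw [Finset.mul_sum, Finset.mul_sum, Finset.mul_sum]
        exact Finset.sum_congr rfl fun j _ => by ring
    _ = ∑ j : Fin m, ∑ i ∈ Finset.Iio j,
          2 * Real.exp δ * MH ^ 2 * (((m : ℝ) - 1 - (i : ℕ)) * B i) * (β j) ^ 2 :=
        stmt7_sum_comm _
    _ ≤ ∑ j : Fin m, B j * (β j) ^ 2 := by
        apply Finset.sum_le_sum
        intro j _
        rcases Nat.eq_zero_or_pos (j : ℕ) with h0 | hpos
        · have : Finset.Iio j = ∅ := by
            ext i; simp only [Finset.mem_Iio, Finset.notMem_empty, iff_false]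
            intro h; have := Fin.lt_iff_val_lt_val.mp h; omega
          rw [this, Finset.sum_empty]
          exact mul_nonneg (hBpos j).le (sq_nonneg _)
        · have hBj := hrec j hpos
          rw [stmt7_filter_Iio] at hBj
          have hEq : ∑ i ∈ Finset.Iio j,
              2 * Real.exp δ * MH ^ 2 * (((m : ℝ) - 1 - (i : ℕ)) * B i) * (β j) ^ 2
              = B j * (β j) ^ 2 := by
            rw [hBj, Finset.mul_sum, Finset.sum_mul]
          exact le_of_eq hEq
end
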